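/- Let β, κ > 0 and D, B ∈ ℝ³. Define E = √(1+β‖B‖²)((1+κ²‖B‖²)D − κ²(B·D)B) / (√(1+κ²‖B‖²)·√(1 + β‖D‖² + κ²‖B‖² + βκ²‖B×D‖²)). Then E satisfies the dyonic Born–Infeld constitutive equation D = (E + κ²(E·B)B)/√(1 − 2βs) with s = (‖E‖² − ‖B‖²)/2 + (κ²/2)(E·B)², and moreover 1 − 2βs = (1+β‖B‖²)(1+κ²‖B‖²)/(1 + β‖D‖² + κ²‖B‖² + βκ²‖B×D‖²) > 0. -/

import Mathlib

noncomputable section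

abbrev V3 := Fin 3 → ℝ

def dot (a b : V3) : ℝ := ∑ i, a i * b i

/-!
Write `K = 1 + κ²‖B‖²`. The map `F ↦ F + κ²(F·B)B` is `I + κ² B Bᵀ`, and
`F₀ = K D − κ²(B·D)B` is `K` times the preimage of `D` under it, so
`E = c F₀` gives `E + κ²(E·B)B = cK D`. The whole statement therefore reduces to the
scalar identity `1 − 2βs = (cK)²`, which is where the prefactor `c` comes from: it
holds exactly when `c² K Q = 1 + β‖B‖²`, with `Q` the denominator of the formula
(Lagrange's identity turns `‖B×D‖²` into `‖B‖²‖D‖² − (B·D)²`).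
-/

theorem dot_eq_dotProduct (a b : V3) : dot a b = a ⬝ᵥ b := rfl

theorem dot_self_nonneg (a : V3) : 0 ≤ dot a a :=
  Finset.sum_nonneg fun i _ => mul_self_nonneg (a i)

theorem dot_cross_cross_self (a b : V3) :
    dot (crossProduct a b) (crossProduct a b) = dot a a * dot b b - dot a b ^ 2 := by
  simp only [dot_eq_dotProduct, cross_dot_cross, dotProduct_comm b a]
  ring

section Dyonic

variable (β κ : ℝ) (D B : V3)

def dyonicDir : V3 := (1 + κ ^ 2 * dot B B) • D - (κ ^ 2 * dot B D) • B

def dyonicDenom : ℝ :=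
  1 + β * dot D D + κ ^ 2 * dot B B
    + β * κ ^ 2 * dot (crossProduct B D) (crossProduct B D)

def biInvariant (E : V3) : ℝ := (dot E E - dot B B) / 2 + κ ^ 2 / 2 * dot E B ^ 2

theorem dot_dyonicDir_right : dot (dyonicDir κ D B) B = dot B D := by
  simp only [dyonicDir, dot_eq_dotProduct, sub_dotProduct, smul_dotProduct, smul_eq_mul,
    dotProduct_comm D B]
  ring

theorem dot_dyonicDir_self :
    dot (dyonicDir κ D B) (dyonicDir κ D B)
      = (1 + κ ^ 2 * dot B B) ^ 2 * dot D D - κ ^ 2 * (2 + κ ^ 2 * dot B B) * dot B D ^ 2 := by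
  simp only [dyonicDir, dot_eq_dotProduct, sub_dotProduct, dotProduct_sub, smul_dotProduct,
    dotProduct_smul, smul_eq_mul, dotProduct_comm D B]
  ring

theorem smul_dyonicDir_add_smul (c : ℝ) :
    c • dyonicDir κ D B + (κ ^ 2 * dot (c • dyonicDir κ D B) B) • B
      = (c * (1 + κ ^ 2 * dot B B)) • D := by
  rw [dot_eq_dotProduct, smul_dotProduct, ← dot_eq_dotProduct, dot_dyonicDir_right]
  ext i
  simp only [dyonicDir, Pi.add_apply, Pi.smul_apply, Pi.sub_apply, smul_eq_mul]
  ring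

theorem dyonicDenom_pos (hβ : 0 ≤ β) : 0 < dyonicDenom β κ D B := by
  have hD := mul_nonneg hβ (dot_self_nonneg D)
  have hB := mul_nonneg (sq_nonneg κ) (dot_self_nonneg B)
  have hBD := mul_nonneg (mul_nonneg hβ (sq_nonneg κ)) (dot_self_nonneg (crossProduct B D))
  unfold dyonicDenom
  linarith

theorem one_sub_two_mul_biInvariant_smul_dyonicDir {c : ℝ}
    (hc : c ^ 2 * (1 + κ ^ 2 * dot B B) * dyonicDenom β κ D B = 1 + β * dot B B) :
    1 - 2 * β * biInvariant κ B (c • dyonicDir κ D B) = (c * (1 + κ ^ 2 * dot B B)) ^ 2 := by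
  rw [dyonicDenom, dot_cross_cross_self] at hc
  simp only [biInvariant, dot_eq_dotProduct, smul_dotProduct, dotProduct_smul, smul_eq_mul]
  simp only [← dot_eq_dotProduct, dot_dyonicDir_self, dot_dyonicDir_right]
  linear_combination (-1 : ℝ) * hc

end Dyonic

theorem BI_dyonic_E_formula_general (β κ : ℝ) (hβ : 0 < β) (D B : V3)
    (E : V3)
    (hE : E = (Real.sqrt (1 + β * dot B B)
        / (Real.sqrt (1 + κ ^ 2 * dot B B)
          * Real.sqrt (1 + β * dot D D + κ ^ 2 * dot B B
              + β * κ ^ 2 * dot (crossProduct B D) (crossProduct B D))))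
      • ((1 + κ ^ 2 * dot B B) • D - (κ ^ 2 * dot B D) • B))
    (s : ℝ) (hs : s = (dot E E - dot B B) / 2 + κ ^ 2 / 2 * (dot E B) ^ 2) :
    1 - 2 * β * s = (1 + β * dot B B) * (1 + κ ^ 2 * dot B B)
      / (1 + β * dot D D + κ ^ 2 * dot B B
          + β * κ ^ 2 * dot (crossProduct B D) (crossProduct B D)) ∧
    0 < 1 - 2 * β * s ∧
    D = (Real.sqrt (1 - 2 * β * s))⁻¹ • (E + (κ ^ 2 * dot E B) • B) := by
  change _ = _ / dyonicDenom β κ D B ∧ _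
  obtain ⟨c, hc⟩ : ∃ c, c = Real.sqrt (1 + β * dot B B)
      / (Real.sqrt (1 + κ ^ 2 * dot B B) * Real.sqrt (dyonicDenom β κ D B)) := ⟨_, rfl⟩
  replace hE : E = c • dyonicDir κ D B := by rw [hc]; exact hE
  have hA : 0 < 1 + β * dot B B := by have := dot_self_nonneg B; positivity
  have hK : 0 < 1 + κ ^ 2 * dot B B := by have := dot_self_nonneg B; positivity
  have hQ := dyonicDenom_pos β κ D B hβ.le
  have hc2 : c ^ 2 = (1 + β * dot B B) / ((1 + κ ^ 2 * dot B B) * dyonicDenom β κ D B) := by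
    rw [hc, div_pow, mul_pow, Real.sq_sqrt hA.le, Real.sq_sqrt hK.le, Real.sq_sqrt hQ.le]
  have hcK : 0 < c * (1 + κ ^ 2 * dot B B) := by rw [hc]; positivity
  have hs' : 1 - 2 * β * s = (c * (1 + κ ^ 2 * dot B B)) ^ 2 := by
    rw [hs, hE]
    refine one_sub_two_mul_biInvariant_smul_dyonicDir β κ D B ?_
    rw [hc2, mul_assoc, div_mul_cancel₀ _ (mul_ne_zero hK.ne' hQ.ne')]
  have hformula : (c * (1 + κ ^ 2 * dot B B)) ^ 2
      = (1 + β * dot B B) * (1 + κ ^ 2 * dot B B) / dyonicDenom β κ D B := by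
    rw [mul_pow, hc2]; field_simp
  refine ⟨hs'.trans hformula, hs' ▸ pow_pos hcK 2, ?_⟩
  rw [hs', Real.sqrt_sq hcK.le, hE, smul_dyonicDir_add_smul, smul_smul,
    inv_mul_cancel₀ hcK.ne', one_smul]

theorem BI_dyonic_E_formula (β κ : ℝ) (hβ : 0 < β) (hκ : 0 < κ) (D B : V3)
    (E : V3)
    (hE : E = (Real.sqrt (1 + β * dot B B)
        / (Real.sqrt (1 + κ ^ 2 * dot B B)
          * Real.sqrt (1 + β * dot D D + κ ^ 2 * dot B B
              + β * κ ^ 2 * dot (crossProduct B D) (crossProduct B D))))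
      • ((1 + κ ^ 2 * dot B B) • D - (κ ^ 2 * dot B D) • B))
    (s : ℝ) (hs : s = (dot E E - dot B B) / 2 + κ ^ 2 / 2 * (dot E B) ^ 2) :
    1 - 2 * β * s = (1 + β * dot B B) * (1 + κ ^ 2 * dot B B)
      / (1 + β * dot D D + κ ^ 2 * dot B B
          + β * κ ^ 2 * dot (crossProduct B D) (crossProduct B D)) ∧
    0 < 1 - 2 * β * s ∧
    D = (Real.sqrt (1 - 2 * β * s))⁻¹ • (E + (κ ^ 2 * dot E B) • B) :=
  BI_dyonic_E_formula_general β κ hβ D B E hE s hs
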